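/- Let d ≥ 1, n ≥ 1, X ⊆ {-1,1}ⁿ, f : X → {0,1}, and 0 ≤ ε < 1/2. Suppose there is a multilinear polynomial q : ℝⁿ → ℝ of degree at most d satisfying q(x) ∈ [0,1] for all x ∈ {-1,1}ⁿ and |q(x) − f(x)| ≤ ε for all x ∈ X. Let ε' := 1/2 − (1/2 − ε)/B(d), where B(d) := (1/d!)·Σ_{s=1}^{d} (d choose s)·s^d. Then there exists a d-multilinear form p̃ : (ℝ^{n+1})^d → ℝ such that |p̃(z⁽¹⁾, …, z⁽ᵈ⁾)| ≤ 1 for all z⁽¹⁾, …, z⁽ᵈ⁾ ∈ {-1,1}^{n+1}, and |p̃(x̃, …, x̃) − f(x)| ≤ ε' for every x ∈ X, where x̃ := (1, x₁, …, xₙ) ∈ ℝ^{n+1}. -/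

import Mathlib

open scoped BigOperators

/-- `B(d) = (1/d!) · Σ_{s=1}^d (d choose s) · s^d`. -/
noncomputable def Bconst (d : ℕ) : ℝ :=
  (1 / (Nat.factorial d : ℝ)) * ∑ s ∈ Finset.Icc 1 d, (d.choose s : ℝ) * (s : ℝ) ^ d

/-!
Put `p = 2q - 1`. It satisfies `|p| ≤ 1` on the cube, hence on the box `[-1,1]ⁿ`, since it is
affine in each coordinate. Homogenize `p` with the extra coordinate `w₀` to a degree-`d` form `H`
and symmetrize its monomials into a `d`-multilinear form `G`, so that `G(w,…,w) = d! H(w)`.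
Ryser's formula for the permanent gives the polarization identity
`G(z) = Σ_{S ⊆ [d]} (-1)^(d-|S|) H(Σ_{j∈S} z_j)`. For `±1`-valued `z`, after flipping signs so that
every `z_j` has `z_j0 = 1`, the vector `Σ_{j∈S} z_j` equals `|S| · (1, u)` with `u` in the box, so
`|G(z)| ≤ Σ_S |S|^d = d! B(d)`. Then `p̃ = ½ ∏_j z_j0 + G / (2 d! B(d))` is bounded by `1` on the
cube and `p̃(x̃,…,x̃) = ½ + (q(x) - ½) / B(d)`.
-/

open Finset

section MultilinearPoly

variable {R ι : Type*} [CommRing R]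

def multilinearPoly (s : Finset (Finset ι)) (c : Finset ι → R) (x : ι → R) : R :=
  ∑ T ∈ s, c T * ∏ i ∈ T, x i

lemma multilinearPoly_mul_add_indicator_empty [DecidableEq ι] (s : Finset (Finset ι))
    (hs : ∅ ∈ s) (c : Finset ι → R) (α β : R) (x : ι → R) :
    multilinearPoly s (fun T => α * c T + if T = ∅ then β else 0) x
      = α * multilinearPoly s c x + β := by
  simp [multilinearPoly, add_mul, sum_add_distrib, mul_sum, mul_assoc, hs]

lemma multilinearPoly_eq_interpolate [DecidableEq ι] (s : Finset (Finset ι))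
    (c : Finset ι → ℝ) (u : ι → ℝ) (i : ι) :
    multilinearPoly s c u = (1 + u i) / 2 * multilinearPoly s c (Function.update u i 1)
      + (1 - u i) / 2 * multilinearPoly s c (Function.update u i (-1)) := by
  simp only [multilinearPoly, mul_sum, ← sum_add_distrib]
  refine sum_congr rfl fun T _ => ?_
  by_cases hi : i ∈ T
  · rw [prod_update_of_mem hi, prod_update_of_mem hi, prod_eq_mul_prod_sdiff_singleton_of_mem hi]
    ring
  · rw [prod_update_of_notMem hi, prod_update_of_notMem hi]
    ring

lemma multilinearPoly_mem_of_abs_le_one [Fintype ι] [DecidableEq ι] {S : Set ℝ}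
    (hS : Convex ℝ S) (s : Finset (Finset ι)) (c : Finset ι → ℝ)
    (hcube : ∀ x : ι → ℝ, (∀ i, x i = 1 ∨ x i = -1) → multilinearPoly s c x ∈ S)
    (u : ι → ℝ) (hu : ∀ i, |u i| ≤ 1) : multilinearPoly s c u ∈ S := by
  suffices h : ∀ t : Finset ι, ∀ u : ι → ℝ, (∀ i, |u i| ≤ 1) →
      (∀ i ∉ t, u i = 1 ∨ u i = -1) → multilinearPoly s c u ∈ S from
    h univ u hu (by simp)
  intro t
  induction t using Finset.induction_on with
  | empty => exact fun u _ hu => hcube u fun i => hu i (notMem_empty i)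
  | insert i t _ ih =>
    intro u hu hsign
    have hupdate : ∀ b : ℝ, (b = 1 ∨ b = -1) →
        multilinearPoly s c (Function.update u i b) ∈ S := by
      intro b hb
      refine ih _ (fun j => ?_) (fun j hj => ?_) <;> rw [Function.update_apply] <;>
        split_ifs with hji
      · rcases hb with rfl | rfl <;> norm_num
      · exact hu j
      · exact hb
      · exact hsign j (by simp [hji, hj])
    have hui := abs_le.mp (hu i)
    rw [multilinearPoly_eq_interpolate s c u i]
    exact hS (hupdate 1 (.inl rfl)) (hupdate (-1) (.inr rfl)) (by linarith) (by linarith) (by ring)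

end MultilinearPoly

theorem Matrix.permanent_eq_ryser {n R : Type*} [Fintype n] [DecidableEq n] [CommRing R]
    (M : Matrix n n R) :
    M.permanent = ∑ S : Finset n, (-1) ^ (Fintype.card n - #S) * ∏ i, ∑ j ∈ S, M j i := by
  -- Inclusion-exclusion over the maps `p : n → n` missing a value; the surjective ones are the
  -- permutations, and those avoiding `t` are the maps into `tᶜ`.
  have h := inclusion_exclusion_sum_inf_compl (G := R) univ
    (fun j => univ.filter fun p : n → n => ∀ i, p i ≠ j) fun p => ∏ i, M (p i) i
  have hsurj : (univ.inf fun j => (univ.filter fun p : n → n => ∀ i, p i ≠ j)ᶜ)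
      = univ.filter Function.Surjective := by
    ext p; simp [mem_inf, Function.Surjective]
  have hmiss : ∀ t : Finset n, (t.inf fun j => univ.filter fun p : n → n => ∀ i, p i ≠ j)
      = Fintype.piFinset fun _ => tᶜ := by
    intro t; ext p; simp only [mem_inf, mem_filter, Fintype.mem_piFinset, mem_compl]; aesop
  rw [hsurj, powerset_univ] at h
  simp only [hmiss, zsmul_eq_mul, Int.cast_pow, Int.cast_neg, Int.cast_one] at h
  rw [Fintype.sum_equiv (compl_involutive.toPerm _) _ (fun t => (-1) ^ #t * ∏ i, ∑ j ∈ tᶜ, M j i)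
    (fun S => by simp [card_compl])]
  simp_rw [prod_univ_sum]
  rw [← h, Matrix.permanent]
  refine sum_bij (fun σ _ => ⇑σ) (fun σ _ => by simpa using σ.surjective)
    (fun σ _ τ _ h => Equiv.ext (congrFun h)) (fun p hp => ?_) (fun _ _ => rfl)
  have hp : p.Surjective := (mem_filter.mp hp).2
  exact ⟨Equiv.ofBijective p ⟨Finite.injective_iff_surjective.mpr hp, hp⟩, mem_univ _, rfl⟩

section Polarization

variable {R ι K : Type*} [CommRing R] {d : ℕ}

def monomialForm (κ : Fin d → ι) : MultilinearMap R (fun _ : Fin d => ι → R) R :=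
  (MultilinearMap.mkPiAlgebra R (Fin d) R).compLinearMap fun j => LinearMap.proj (κ j)

lemma monomialForm_apply (κ : Fin d → ι) (z : Fin d → ι → R) :
    monomialForm κ z = ∏ j, z j (κ j) := by
  simp [monomialForm]

def symmMonomialForm (κ : Fin d → ι) : MultilinearMap R (fun _ : Fin d => ι → R) R :=
  ∑ σ : Equiv.Perm (Fin d), monomialForm (κ ∘ σ.symm)

lemma symmMonomialForm_apply (κ : Fin d → ι) (z : Fin d → ι → R) :
    symmMonomialForm κ z = (Matrix.of fun j t => z j (κ t)).permanent := by
  simp only [symmMonomialForm, _root_.sum_apply, monomialForm_apply, Matrix.permanent,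
    Matrix.of_apply, Function.comp_apply]
  exact sum_congr rfl fun σ _ => by rw [← Equiv.prod_comp σ]; simp

def homogPoly (s : Finset K) (a : K → R) (κ : K → Fin d → ι) (w : ι → R) : R :=
  ∑ k ∈ s, a k * ∏ t, w (κ k t)

def polarForm (s : Finset K) (a : K → R) (κ : K → Fin d → ι) :
    MultilinearMap R (fun _ : Fin d => ι → R) R :=
  ∑ k ∈ s, a k • symmMonomialForm (κ k)

variable (s : Finset K) (a : K → R) (κ : K → Fin d → ι)

lemma homogPoly_smul (c : R) (w : ι → R) :
    homogPoly s a κ (c • w) = c ^ d * homogPoly s a κ w := by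
  simp only [homogPoly, Pi.smul_apply, smul_eq_mul, prod_mul_distrib, prod_const, card_univ,
    Fintype.card_fin, mul_sum]
  exact sum_congr rfl fun _ _ => by ring

lemma polarForm_apply_const (w : ι → R) :
    polarForm s a κ (fun _ => w) = d.factorial * homogPoly s a κ w := by
  simp [polarForm, homogPoly, symmMonomialForm_apply, Matrix.permanent, mul_sum, mul_left_comm,
    Fintype.card_perm]

lemma polarForm_eq_sum_powerset (z : Fin d → ι → R) :
    polarForm s a κ z = ∑ S : Finset (Fin d), (-1) ^ (d - #S) * homogPoly s a κ (∑ j ∈ S, z j) := by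
  simp only [polarForm, homogPoly, _root_.sum_apply, _root_.smul_apply,
    symmMonomialForm_apply, Matrix.permanent_eq_ryser, Matrix.of_apply, Fintype.card_fin,
    smul_eq_mul, mul_sum, Finset.sum_apply]
  rw [sum_comm]
  exact sum_congr rfl fun _ _ => sum_congr rfl fun _ _ => by ring

end Polarization

section Homogenization

variable {n : ℕ}

/-- The indices of the homogenized monomial `w 0 ^ (d - #T) * ∏ i ∈ T, w i.succ`:
the elements of `T` in increasing order, then `0`s. -/
def padEnum (d : ℕ) (T : Finset (Fin n)) (t : Fin d) : Fin (n + 1) :=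
  if h : (t : ℕ) < #T then (T.orderEmbOfFin rfl ⟨t, h⟩).succ else 0

lemma prod_cons_one_padEnum {M : Type*} [CommMonoid M] {d : ℕ} (T : Finset (Fin n))
    (hT : #T ≤ d) (x : Fin n → M) :
    ∏ t, (Fin.cons 1 x : Fin (n + 1) → M) (padEnum d T t) = ∏ i ∈ T, x i := by
  set g : ℕ → M := fun t => if h : t < #T then x (T.orderEmbOfFin rfl ⟨t, h⟩) else 1
  have hg : ∀ t : Fin d, (Fin.cons 1 x : Fin (n + 1) → M) (padEnum d T t) = g t := by
    intro t
    unfold padEnum g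
    split_ifs <;> simp
  rw [Fintype.prod_congr _ _ hg, Fin.prod_univ_eq_prod_range g, ← prod_range_mul_prod_Ico g hT,
    prod_eq_one (s := Ico _ _) fun t ht => dif_neg (by simp at ht; omega), mul_one,
    ← Fin.prod_univ_eq_prod_range g]
  conv_rhs => rw [← T.map_orderEmbOfFin_univ rfl, prod_map]
  exact Finset.prod_congr rfl fun t _ => dif_pos t.2

lemma homogPoly_cons_one_padEnum {R : Type*} [CommRing R] {d : ℕ} (s : Finset (Finset (Fin n)))
    (hs : ∀ T ∈ s, #T ≤ d) (c : Finset (Fin n) → R) (x : Fin n → R) :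
    homogPoly s c (padEnum d) (Fin.cons 1 x) = multilinearPoly s c x :=
  sum_congr rfl fun T hT => by rw [prod_cons_one_padEnum T (hs T hT)]

end Homogenization

section CubeBound

variable {K : Type*} {n d : ℕ}

lemma exists_eq_smul_cons_of_abs_le (v : Fin (n + 1) → ℝ) (hv : ∀ i, |v i| ≤ v 0) :
    ∃ u : Fin n → ℝ, (∀ i, |u i| ≤ 1) ∧ v = v 0 • Fin.cons 1 u := by
  rcases (abs_nonneg _ |>.trans (hv 0)).eq_or_lt with h0 | hpos
  · refine ⟨0, by simp, funext fun i => ?_⟩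
    simpa [← h0] using hv i
  · refine ⟨fun i => v i.succ / v 0, fun i => ?_, funext fun i => ?_⟩
    · rw [abs_div, abs_of_pos hpos, div_le_one hpos]
      exact hv _
    · cases i using Fin.cases <;> simp [mul_div_cancel₀ _ hpos.ne']

variable (s : Finset K) (a : K → ℝ) (κ : K → Fin d → Fin (n + 1))

lemma abs_homogPoly_le
    (ha : ∀ u : Fin n → ℝ, (∀ i, |u i| ≤ 1) → |homogPoly s a κ (Fin.cons 1 u)| ≤ 1)
    (v : Fin (n + 1) → ℝ) (hv : ∀ i, |v i| ≤ v 0) :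
    |homogPoly s a κ v| ≤ v 0 ^ d := by
  obtain ⟨u, hu, hvu⟩ := exists_eq_smul_cons_of_abs_le v hv
  have h0 : 0 ≤ v 0 := (abs_nonneg _).trans (hv 0)
  conv_lhs => rw [hvu, homogPoly_smul, abs_mul, abs_pow, abs_of_nonneg h0]
  exact mul_le_of_le_one_right (pow_nonneg h0 d) (ha u hu)

lemma abs_polarForm_le
    (ha : ∀ u : Fin n → ℝ, (∀ i, |u i| ≤ 1) → |homogPoly s a κ (Fin.cons 1 u)| ≤ 1)
    (z : Fin d → Fin (n + 1) → ℝ) (hz0 : ∀ j, |z j 0| = 1) (hz : ∀ j i, |z j i| ≤ 1) :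
    |polarForm s a κ z| ≤ ∑ S : Finset (Fin d), (#S : ℝ) ^ d := by
  set w : Fin d → Fin (n + 1) → ℝ := fun j => z j 0 • z j
  have hw : |polarForm s a κ w| = |polarForm s a κ z| := by
    rw [MultilinearMap.map_smul_univ, smul_eq_mul, abs_mul, abs_prod]
    simp [hz0]
  rw [← hw, polarForm_eq_sum_powerset]
  refine (abs_sum_le_sum_abs _ _).trans (sum_le_sum fun S _ => ?_)
  have hw0 : (∑ j ∈ S, w j) 0 = #S := by
    simp [w, ← sq, ← sq_abs, hz0]
  rw [abs_mul, abs_pow, abs_neg, abs_one, one_pow, one_mul, ← hw0]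
  refine abs_homogPoly_le s a κ ha _ fun i => ?_
  rw [hw0, Finset.sum_apply]
  refine (abs_sum_le_sum_abs _ _).trans ?_
  simpa [w, abs_mul, hz0] using sum_le_sum fun j (_ : j ∈ S) => hz j i

end CubeBound

lemma sum_card_pow_eq_factorial_mul_Bconst {d : ℕ} (hd : 1 ≤ d) :
    ∑ S : Finset (Fin d), (#S : ℝ) ^ d = d.factorial * Bconst d := by
  rw [Bconst, ← mul_assoc, mul_one_div_cancel (by positivity), one_mul, ← powerset_univ,
    sum_powerset_apply_card fun m => (m : ℝ) ^ d, card_univ, Fintype.card_fin]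
  refine (sum_subset (fun m hm => ?_) fun m hm hm' => ?_).symm.trans (sum_congr rfl fun m _ => ?_)
  · simp only [mem_Icc, mem_range] at hm ⊢; omega
  · obtain rfl : m = 0 := by simp only [mem_Icc, mem_range] at hm hm'; omega
    simp; omega
  · simp

lemma one_le_Bconst {d : ℕ} (hd : 1 ≤ d) : 1 ≤ Bconst d := by
  have hfac : (d.factorial : ℝ) ≤ d.factorial * Bconst d := by
    rw [← sum_card_pow_eq_factorial_mul_Bconst hd]
    calc (d.factorial : ℝ) ≤ (d ^ d : ℕ) := by exact_mod_cast d.factorial_le_pow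
      _ = (#(univ : Finset (Fin d)) : ℝ) ^ d := by simp
      _ ≤ _ := single_le_sum (f := fun S : Finset (Fin d) => (#S : ℝ) ^ d)
        (fun S _ => by positivity) (mem_univ _)
  exact le_of_mul_le_mul_left (by simpa using hfac) (by positivity)

lemma exists_multilinearMap_abs_le_one_on_cube {K : Type*} {n d : ℕ} (hd : 1 ≤ d)
    (s : Finset K) (a : K → ℝ) (κ : K → Fin d → Fin (n + 1))
    (ha : ∀ u : Fin n → ℝ, (∀ i, |u i| ≤ 1) → |homogPoly s a κ (Fin.cons 1 u)| ≤ 1) :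
    ∃ pt : MultilinearMap ℝ (fun _ : Fin d => Fin (n + 1) → ℝ) ℝ,
      (∀ z : Fin d → Fin (n + 1) → ℝ, (∀ j i, z j i = 1 ∨ z j i = -1) → |pt z| ≤ 1) ∧
      ∀ x : Fin n → ℝ, pt (fun _ => Fin.cons 1 x)
        = 1 / 2 + homogPoly s a κ (Fin.cons 1 x) / (2 * Bconst d) := by
  have hB := one_le_Bconst hd
  have hD : 0 < (d.factorial : ℝ) * Bconst d := by positivity
  refine ⟨(1 / 2 : ℝ) • monomialForm (fun _ => 0) + (2 * (d.factorial * Bconst d))⁻¹ •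
    polarForm s a κ, fun z hz => ?_, fun x => ?_⟩
  · have hz0 : ∀ j, |z j 0| = 1 := fun j => by rcases hz j 0 with h | h <;> simp [h]
    have hG := abs_polarForm_le s a κ ha z hz0 fun j i => by rcases hz j i with h | h <;> simp [h]
    rw [sum_card_pow_eq_factorial_mul_Bconst hd] at hG
    have hG' : |(2 * (d.factorial * Bconst d))⁻¹ * polarForm s a κ z| ≤ 1 / 2 := by
      rw [abs_mul, abs_of_pos (by positivity), inv_mul_le_iff₀ (by positivity)]
      linarith
    simp only [_root_.add_apply, _root_.smul_apply, smul_eq_mul, monomialForm_apply]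
    refine (abs_add_le _ _).trans ?_
    rw [abs_mul, abs_prod]
    simp only [hz0, prod_const_one]
    norm_num at hG' ⊢
    linarith
  · simp only [_root_.add_apply, _root_.smul_apply, smul_eq_mul, monomialForm_apply,
      polarForm_apply_const, Fin.cons_zero, prod_const_one]
    field_simp

lemma abs_half_add_div_sub_le {q f ε B : ℝ} (hf : f = 0 ∨ f = 1) (hq : q ∈ Set.Icc 0 1)
    (hqf : |q - f| ≤ ε) (hB : 1 ≤ B) :
    |1 / 2 + (2 * q - 1) / (2 * B) - f| ≤ 1 / 2 - (1 / 2 - ε) / B := by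
  obtain ⟨r, hr0, hr1, rfl⟩ : ∃ r : ℝ, 0 < r ∧ r ≤ 1 ∧ B = r⁻¹ :=
    ⟨B⁻¹, by positivity, inv_le_one_of_one_le₀ hB, (inv_inv B).symm⟩
  simp only [mul_inv_rev, inv_inv, div_eq_mul_inv]
  rw [Set.mem_Icc] at hq
  rcases hf with rfl | rfl <;> rw [abs_le] at hqf ⊢ <;> constructor <;> nlinarith

theorem approx_deg_to_approx_bmdeg (d n : ℕ) (hd : 1 ≤ d)
    (X : Set (Fin n → ℝ)) (hX : ∀ x ∈ X, ∀ i, x i = 1 ∨ x i = -1)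
    (f : (Fin n → ℝ) → ℝ) (hf : ∀ x ∈ X, f x = 0 ∨ f x = 1)
    (ε : ℝ)
    (c : Finset (Fin n) → ℝ) (q : (Fin n → ℝ) → ℝ)
    (hq : ∀ x : Fin n → ℝ,
      q x = ∑ T ∈ Finset.univ.filter (fun T : Finset (Fin n) => T.card ≤ d),
        c T * ∏ i ∈ T, x i)
    (hq01 : ∀ x : Fin n → ℝ, (∀ i, x i = 1 ∨ x i = -1) → q x ∈ Set.Icc (0 : ℝ) 1)
    (happ : ∀ x ∈ X, |q x - f x| ≤ ε) :
    ∃ pt : MultilinearMap ℝ (fun _ : Fin d => (Fin (n + 1) → ℝ)) ℝ,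
      (∀ z : Fin d → (Fin (n + 1) → ℝ),
        (∀ j i, z j i = 1 ∨ z j i = -1) → |pt z| ≤ 1) ∧
      (∀ x ∈ X, |pt (fun _ => Fin.cons 1 x) - f x| ≤ 1 / 2 - (1 / 2 - ε) / Bconst d) := by
  classical
  set A := univ.filter fun T : Finset (Fin n) => #T ≤ d
  have hA : ∀ T ∈ A, #T ≤ d := fun T hT => (mem_filter.mp hT).2
  set a : Finset (Fin n) → ℝ := fun T => 2 * c T + if T = ∅ then -1 else 0
  have hpoly : ∀ x, multilinearPoly A a x = 2 * q x - 1 := fun x => by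
    rw [multilinearPoly_mul_add_indicator_empty A (by simp [A]), hq, multilinearPoly,
      sub_eq_add_neg]
  have hbox : ∀ u : Fin n → ℝ, (∀ i, |u i| ≤ 1) →
      |homogPoly A a (padEnum d) (Fin.cons 1 u)| ≤ 1 := by
    intro u hu
    rw [homogPoly_cons_one_padEnum A hA, abs_le, ← Set.mem_Icc]
    refine multilinearPoly_mem_of_abs_le_one (convex_Icc _ _) A a (fun x hx => ?_) u hu
    obtain ⟨h0, h1⟩ := hq01 x hx
    rw [hpoly, Set.mem_Icc]
    constructor <;> linarith
  obtain ⟨pt, hcube, hdiag⟩ := exists_multilinearMap_abs_le_one_on_cube hd A a (padEnum d) hbox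
  refine ⟨pt, hcube, fun x hx => ?_⟩
  rw [hdiag, homogPoly_cons_one_padEnum A hA, hpoly]
  exact abs_half_add_div_sub_le (hf x hx) (hq01 x (hX x hx)) (happ x hx) (one_le_Bconst hd)
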